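/- Let Z be a normal space, let F = {F_i}_{i∈I} be a closed family combinatorially refining an open family U = {U_i}_{i∈I} of subsets of Z. If both families F and U are locally finite, then there exists an open locally finite family G = {G_i}_{i∈I} with F_i ⊂ G_i ⊂ cl(G_i) ⊂ U_i for every i ∈ I and such that the nerves of F and G are equal. -/

import Mathlib

/-!
Swell the sets `F i` one index at a time, by Zorn's lemma on partial swellings. When `F i` is
swollen to an open `G i`, the closure of `G i` must avoid every intersection
`⋂ j ∈ K, closure (G j)` of the current family for which `F i ∩ ⋂ j ∈ K, F j = ∅`; these
intersections form a locally finite family of closed sets (each `closure (G j)` lies in `U j`),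
so their union is closed and disjoint from `F i`, and normality provides `G i`. Keeping the nerve
condition on closures is what lets it survive every later step and the union of a chain.
-/

open Set Function

theorem LocallyFinite.finset_biInter {ι X : Type*} [TopologicalSpace X] {f : ι → Set X}
    (hf : LocallyFinite f) : LocallyFinite fun K : Finset ι => ⋂ i ∈ K, f i := by
  intro x
  obtain ⟨V, hV, hVf⟩ := hf x
  refine ⟨V, hV, (hVf.finite_subsets.preimage Finset.coe_injective.injOn).subset ?_⟩
  rintro K ⟨y, hyK, hyV⟩ i hi
  exact ⟨y, mem_iInter₂.1 hyK i hi, hyV⟩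

namespace SwellingLemma

variable {ι X : Type*} [TopologicalSpace X] {F U : ι → Set X}

structure PartialSwelling (F U : ι → Set X) where
  toFun : ι → Set X
  carrier : Set ι
  isOpen : ∀ i ∈ carrier, IsOpen (toFun i)
  subset : ∀ i, F i ⊆ toFun i
  closure_subset : ∀ i, closure (toFun i) ⊆ U i
  apply_eq : ∀ i ∉ carrier, toFun i = F i
  nonempty_of_nonempty_closure :
    ∀ K : Finset ι, (⋂ i ∈ K, closure (toFun i)).Nonempty → (⋂ i ∈ K, F i).Nonempty

namespace PartialSwelling

instance : CoeFun (PartialSwelling F U) fun _ => ι → Set X := ⟨toFun⟩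

instance : Preorder (PartialSwelling F U) where
  le v w := v.carrier ⊆ w.carrier ∧ ∀ i ∈ v.carrier, v i = w i
  le_refl _ := ⟨Subset.rfl, fun _ _ => rfl⟩
  le_trans _ _ _ h₁ h₂ := ⟨h₁.1.trans h₂.1, fun i hi => (h₁.2 i hi).trans (h₂.2 i (h₁.1 hi))⟩

def bot (hFc : ∀ i, IsClosed (F i)) (hFU : ∀ i, F i ⊆ U i) : PartialSwelling F U where
  toFun := F
  carrier := ∅
  isOpen _ hi := hi.elim
  subset _ := Subset.rfl
  closure_subset i := by rw [(hFc i).closure_eq]; exact hFU i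
  apply_eq _ _ := rfl
  nonempty_of_nonempty_closure K := by simp only [(hFc _).closure_eq, imp_self]

section ChainSup

variable {c : Set (PartialSwelling F U)}

theorem apply_eq_of_chain (hc : IsChain (· ≤ ·) c) {v w : PartialSwelling F U} (hv : v ∈ c)
    (hw : w ∈ c) {i : ι} (hiv : i ∈ v.carrier) (hiw : i ∈ w.carrier) : v i = w i :=
  (hc.total hv hw).elim (fun h => h.2 i hiv) fun h => (h.2 i hiw).symm

def chainSupCarrier (c : Set (PartialSwelling F U)) : Set ι :=
  ⋃ v ∈ c, v.carrier

open scoped Classical in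
def chainSupFun (c : Set (PartialSwelling F U)) (i : ι) : Set X :=
  if h : ∃ v ∈ c, i ∈ v.carrier then h.choose i else F i

theorem chainSupFun_eq_of_mem (hc : IsChain (· ≤ ·) c) {v : PartialSwelling F U} (hv : v ∈ c)
    {i : ι} (hi : i ∈ v.carrier) : chainSupFun c i = v i := by
  have h : ∃ v ∈ c, i ∈ v.carrier := ⟨v, hv, hi⟩
  rw [chainSupFun, dif_pos h]
  exact apply_eq_of_chain hc h.choose_spec.1 hv h.choose_spec.2 hi

theorem chainSupFun_eq_of_notMem {v : PartialSwelling F U} (hv : v ∈ c) {i : ι}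
    (hi : i ∉ chainSupCarrier c) : chainSupFun c i = v i := by
  have h : ¬∃ v ∈ c, i ∈ v.carrier := by simpa [chainSupCarrier] using hi
  rw [chainSupFun, dif_neg h, v.apply_eq i fun hiv => h ⟨v, hv, hiv⟩]

theorem exists_mem_forall_chainSupFun_eq (hc : IsChain (· ≤ ·) c) (hne : c.Nonempty)
    (K : Finset ι) : ∃ v ∈ c, ∀ i ∈ K,
      (i ∈ chainSupCarrier c → i ∈ v.carrier) ∧ chainSupFun c i = v i := by
  classical
  obtain ⟨v, hv, hKv⟩ := DirectedOn.exists_mem_subset_of_finset_subset_biUnion hne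
    (hc.directedOn.mono fun _ _ h => h.1) (s := K.filter (· ∈ chainSupCarrier c))
    fun i hi => (Finset.mem_filter.1 hi).2
  refine ⟨v, hv, fun i hi => ?_⟩
  by_cases hi' : i ∈ chainSupCarrier c
  · have hiv : i ∈ v.carrier := hKv (by simp [hi, hi'])
    exact ⟨fun _ => hiv, chainSupFun_eq_of_mem hc hv hiv⟩
  · exact ⟨fun h => absurd h hi', chainSupFun_eq_of_notMem hv hi'⟩

def chainSup (hc : IsChain (· ≤ ·) c) (hne : c.Nonempty) : PartialSwelling F U where
  toFun := chainSupFun c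
  carrier := chainSupCarrier c
  isOpen i hi := by
    obtain ⟨v, -, hv⟩ := exists_mem_forall_chainSupFun_eq hc hne {i}
    obtain ⟨hiv, heq⟩ := hv i (Finset.mem_singleton_self i)
    exact heq ▸ v.isOpen i (hiv hi)
  subset i := by
    obtain ⟨v, -, hv⟩ := exists_mem_forall_chainSupFun_eq hc hne {i}
    exact (hv i (Finset.mem_singleton_self i)).2 ▸ v.subset i
  closure_subset i := by
    obtain ⟨v, -, hv⟩ := exists_mem_forall_chainSupFun_eq hc hne {i}
    exact (hv i (Finset.mem_singleton_self i)).2 ▸ v.closure_subset i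
  apply_eq i hi := by
    rw [chainSupFun_eq_of_notMem hne.some_mem hi]
    exact hne.some.apply_eq i fun h => hi (mem_biUnion hne.some_mem h)
  nonempty_of_nonempty_closure K hK := by
    obtain ⟨v, -, hv⟩ := exists_mem_forall_chainSupFun_eq hc hne K
    refine v.nonempty_of_nonempty_closure K ?_
    rwa [iInter₂_congr fun i hi => by rw [(hv i hi).2]] at hK

theorem le_chainSup (hc : IsChain (· ≤ ·) c) (hne : c.Nonempty) {v : PartialSwelling F U}
    (hv : v ∈ c) : v ≤ chainSup hc hne :=
  ⟨subset_biUnion_of_mem (u := carrier) hv, fun _ hi => (chainSupFun_eq_of_mem hc hv hi).symm⟩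

end ChainSup

/-- The closure of a new `i`-th set has to avoid this set for the nerve condition to persist. -/
def forbidden (v : PartialSwelling F U) (i : ι) : Set X :=
  ⋃ K : {K : Finset ι // F i ∩ ⋂ j ∈ K, F j = ∅}, ⋂ j ∈ K.1, closure (v j)

theorem isClosed_forbidden (hUlf : LocallyFinite U) (v : PartialSwelling F U) (i : ι) :
    IsClosed (v.forbidden i) :=
  ((hUlf.subset v.closure_subset).finset_biInter.comp_injective Subtype.val_injective
    ).isClosed_iUnion fun _ => isClosed_biInter fun _ _ => isClosed_closure

theorem disjoint_forbidden (v : PartialSwelling F U) (i : ι) : Disjoint (F i) (v.forbidden i) := by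
  classical
  refine disjoint_left.2 fun x hxi hx => ?_
  obtain ⟨⟨K, hK⟩, hxK⟩ := mem_iUnion.1 hx
  obtain ⟨y, hy⟩ := v.nonempty_of_nonempty_closure (insert i K)
    ⟨x, by simpa [Finset.set_biInter_insert] using
      ⟨subset_closure (v.subset i hxi), mem_iInter₂.1 hxK⟩⟩
  rw [Finset.set_biInter_insert] at hy
  exact hK.subset hy

open scoped Classical in
def swellAt (v : PartialSwelling F U) (i : ι) (A : Set X) (hAo : IsOpen A) (hFA : F i ⊆ A)
    (hAU : closure A ⊆ U i \ v.forbidden i) : PartialSwelling F U where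
  toFun := update v i A
  carrier := insert i v.carrier
  isOpen j hj := by
    rcases eq_or_ne j i with rfl | hji
    · rwa [update_self]
    · rw [update_of_ne hji]
      exact v.isOpen j (hj.resolve_left hji)
  subset j := by
    rcases eq_or_ne j i with rfl | hji
    · rwa [update_self]
    · rw [update_of_ne hji]
      exact v.subset j
  closure_subset j := by
    rcases eq_or_ne j i with rfl | hji
    · rw [update_self]
      exact hAU.trans sdiff_subset
    · rw [update_of_ne hji]
      exact v.closure_subset j
  apply_eq j hj := by
    rw [mem_insert_iff, not_or] at hj
    rw [update_of_ne hj.1, v.apply_eq j hj.2]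
  nonempty_of_nonempty_closure K hK := by
    by_cases hiK : i ∈ K
    · by_contra hF
      rw [← Finset.insert_erase hiK, Finset.set_biInter_insert] at hK hF
      obtain ⟨x, hxA, hx⟩ := hK
      rw [update_self] at hxA
      refine (hAU hxA).2 (mem_iUnion.2 ⟨⟨K.erase i, not_nonempty_iff_eq_empty.1 hF⟩, ?_⟩)
      refine mem_iInter₂.2 fun j hj => ?_
      simpa [update_of_ne (Finset.ne_of_mem_erase hj)] using mem_iInter₂.1 hx j hj
    · refine v.nonempty_of_nonempty_closure K ?_
      rwa [iInter₂_congr fun j hj => by rw [update_of_ne (ne_of_mem_of_not_mem hj hiK)]] at hK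

variable [NormalSpace X] (hFc : ∀ i, IsClosed (F i)) (hUo : ∀ i, IsOpen (U i))
  (hUlf : LocallyFinite U)
include hFc hUo hUlf

theorem exists_le_mem_carrier (v : PartialSwelling F U) {i : ι} (hi : i ∉ v.carrier) :
    ∃ w, v ≤ w ∧ i ∈ w.carrier := by
  classical
  have hFiU : F i ⊆ U i := (v.subset i).trans (subset_closure.trans (v.closure_subset i))
  obtain ⟨A, hAo, hFA, hAU⟩ := normal_exists_closure_subset (hFc i)
    ((hUo i).sdiff (v.isClosed_forbidden hUlf i)) (subset_sdiff.2 ⟨hFiU, v.disjoint_forbidden i⟩)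
  refine ⟨v.swellAt i A hAo hFA hAU, ⟨subset_insert _ _, fun j hj => ?_⟩, mem_insert _ _⟩
  exact (update_of_ne (ne_of_mem_of_not_mem hj hi) _ _).symm

theorem exists_forall_mem_carrier (hFU : ∀ i, F i ⊆ U i) :
    ∃ G : PartialSwelling F U, ∀ i, i ∈ G.carrier := by
  have : Nonempty (PartialSwelling F U) := ⟨bot hFc hFU⟩
  obtain ⟨G, hG⟩ := zorn_le_nonempty (α := PartialSwelling F U) fun c hc hne =>
    ⟨chainSup hc hne, fun _ => le_chainSup hc hne⟩
  refine ⟨G, fun i => by_contra fun hi => ?_⟩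
  obtain ⟨w, hGw, hiw⟩ := G.exists_le_mem_carrier hFc hUo hUlf hi
  exact hi ((hG hGw).1 hiw)

end PartialSwelling

end SwellingLemma

theorem exists_open_locallyFinite_swelling_same_nerve
    {Z : Type*} [TopologicalSpace Z] [NormalSpace Z] {I : Type*}
    (F U : I → Set Z) (hFc : ∀ i, IsClosed (F i)) (hUo : ∀ i, IsOpen (U i))
    (hFU : ∀ i, F i ⊆ U i) (hUlf : LocallyFinite U) :
    ∃ G : I → Set Z, (∀ i, IsOpen (G i)) ∧ LocallyFinite G ∧
      (∀ i, F i ⊆ G i) ∧ (∀ i, closure (G i) ⊆ U i) ∧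
      ∀ K : Finset I, (⋂ i ∈ K, G i).Nonempty ↔ (⋂ i ∈ K, F i).Nonempty := by
  obtain ⟨G, hG⟩ := SwellingLemma.PartialSwelling.exists_forall_mem_carrier hFc hUo hUlf hFU
  refine ⟨G, fun i => G.isOpen i (hG i), hUlf.subset fun i => subset_closure.trans
    (G.closure_subset i), G.subset, G.closure_subset, fun K => ⟨fun hGK => ?_, fun hFK => ?_⟩⟩
  · exact G.nonempty_of_nonempty_closure K (hGK.mono (iInter₂_mono fun _ _ => subset_closure))
  · exact hFK.mono (iInter₂_mono fun i _ => G.subset i)
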